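/- arXiv:2602.19342 — 2 statements merged into one kernel-verified Lean document; each statement's English description precedes it below -/
import Mathlib

section
/- Let T = (T_1,…,T_n) be a (σ,δ)-pseudo-multilinear transformation on a left A-module V. Then the map φ: S = A[t_1,…,t_n; σ, δ] → End(V,+) defined on a polynomial f by substituting T_i for t_i and left multiplication L_a for each coefficient a ∈ A (i.e. φ(f) = f(T)) is a ring homomorphism. -/
structure OreExtension (A : Type*) [Ring A] (n : ℕ)
    (σ : A →+* Matrix (Fin n) (Fin n) A) (δ : Fin n → A →+ A) : Type _ where
  S : Type*
  [ringS : Ring S]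
  ι : A →+* S
  t : Fin n → S
  commute_rule : ∀ (i : Fin n) (a : A),
    t i * ι a = (∑ j, ι (σ a i j) * t j) + ι (δ i a)
  unique_repr : ∀ s : S, ∃! c : FreeMonoid (Fin n) →₀ A,
    s = c.sum fun w x => ι x * (List.map t (FreeMonoid.toList w)).prod

attribute [instance] OreExtension.ringS

/-!
The monomials `a t^w` (`a ∈ A`, `w` a word in the variables) form an additive basis of `S`, so
`S` has a universal property: for a ring hom `L : A →+* R` and elements `x i : R` obeying the
commutation rule `x i * L a = ∑ j, L (σ a i j) * x j + L (δ i a)`, the additive map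
`a t^w ↦ L a * x^w` is multiplicative. Multiplicativity only has to be checked against a monomial
on the left, and by induction on the word against a single `ι a` or `t i`; for `t i` the
commutation rules in `S` and in `R` rewrite both sides in the same way. A pseudo-multilinear
transformation is exactly a family `T` satisfying the commutation rule for `L a = (a • ·)`.
-/

namespace OreExtension

variable {A : Type*} [Ring A] {n : ℕ} {σ : A →+* Matrix (Fin n) (Fin n) A} {δ : Fin n → A →+ A}
  (e : OreExtension A n σ δ)

def monomial : FreeMonoid (Fin n) →* e.S := FreeMonoid.lift e.t

noncomputable def sumMonomials : (FreeMonoid (Fin n) →₀ A) →+ e.S :=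
  Finsupp.liftAddHom fun w => (AddMonoidHom.mulRight (e.monomial w)).comp e.ι.toAddMonoidHom

lemma sumMonomials_apply (c : FreeMonoid (Fin n) →₀ A) :
    e.sumMonomials c = c.sum fun w a => e.ι a * (List.map e.t (FreeMonoid.toList w)).prod := by
  rw [sumMonomials, Finsupp.liftAddHom_apply]
  simp only [monomial, FreeMonoid.lift_apply]
  rfl

lemma bijective_sumMonomials : Function.Bijective e.sumMonomials := by
  refine ⟨fun c c' h => ?_, fun s => ?_⟩
  · obtain ⟨_, -, huniq⟩ := e.unique_repr (e.sumMonomials c)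
    exact (huniq c (e.sumMonomials_apply c)).trans
      (huniq c' (h.trans (e.sumMonomials_apply c'))).symm
  · obtain ⟨c, hc, -⟩ := e.unique_repr s
    exact ⟨c, (e.sumMonomials_apply c).trans hc.symm⟩

noncomputable def repr : e.S ≃+ (FreeMonoid (Fin n) →₀ A) :=
  (AddEquiv.ofBijective e.sumMonomials e.bijective_sumMonomials).symm

lemma repr_symm_single (w : FreeMonoid (Fin n)) (a : A) :
    e.repr.symm (Finsupp.single w a) = e.ι a * e.monomial w :=
  Finsupp.liftAddHom_apply_single _ w a

lemma addHom_ext {M : Type*} [AddZeroClass M] {f g : e.S →+ M}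
    (h : ∀ (a : A) (w : FreeMonoid (Fin n)), f (e.ι a * e.monomial w) = g (e.ι a * e.monomial w)) :
    f = g := by
  have hcomp : f.comp e.repr.symm.toAddMonoidHom = g.comp e.repr.symm.toAddMonoidHom :=
    Finsupp.addHom_ext fun w a => by simpa [repr_symm_single] using h a w
  ext s
  simpa using DFunLike.congr_fun hcomp (e.repr s)

lemma monomial_of_mul (i : Fin n) (w : FreeMonoid (Fin n)) :
    e.monomial (FreeMonoid.of i * w) = e.t i * e.monomial w := by
  rw [map_mul, monomial, FreeMonoid.lift_eval_of]

section lift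

variable {R : Type*} [Ring R] (L : A →+* R) (x : Fin n → R)

noncomputable def lift : e.S →+ R :=
  (Finsupp.liftAddHom fun w => (AddMonoidHom.mulRight (FreeMonoid.lift x w)).comp
    L.toAddMonoidHom).comp e.repr.toAddMonoidHom

lemma lift_ι_mul_monomial (a : A) (w : FreeMonoid (Fin n)) :
    e.lift L x (e.ι a * e.monomial w) = L a * FreeMonoid.lift x w := by
  rw [← repr_symm_single]
  simp [lift]

lemma lift_monomial (w : FreeMonoid (Fin n)) : e.lift L x (e.monomial w) = FreeMonoid.lift x w := by
  simpa using e.lift_ι_mul_monomial L x 1 w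

lemma lift_ι_mul (a : A) (s : e.S) : e.lift L x (e.ι a * s) = L a * e.lift L x s := by
  suffices (e.lift L x).comp (AddMonoidHom.mulLeft (e.ι a)) =
      (AddMonoidHom.mulLeft (L a)).comp (e.lift L x) from DFunLike.congr_fun this s
  refine e.addHom_ext fun b w => ?_
  simp only [AddMonoidHom.comp_apply, AddMonoidHom.coe_mulLeft, ← mul_assoc, ← map_mul,
    lift_ι_mul_monomial]

variable (hx : ∀ (i : Fin n) (a : A), x i * L a = (∑ j, L (σ a i j) * x j) + L (δ i a))
include hx

lemma lift_t_mul (i : Fin n) (s : e.S) : e.lift L x (e.t i * s) = x i * e.lift L x s := by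
  suffices (e.lift L x).comp (AddMonoidHom.mulLeft (e.t i)) =
      (AddMonoidHom.mulLeft (x i)).comp (e.lift L x) from DFunLike.congr_fun this s
  refine e.addHom_ext fun a w => ?_
  simp only [AddMonoidHom.comp_apply, AddMonoidHom.coe_mulLeft, lift_ι_mul_monomial, ← mul_assoc,
    e.commute_rule, hx, add_mul, Finset.sum_mul, map_add, map_sum]
  congr 1
  refine Finset.sum_congr rfl fun j _ => ?_
  rw [mul_assoc, ← monomial_of_mul, lift_ι_mul_monomial, map_mul, FreeMonoid.lift_eval_of,
    mul_assoc]

lemma lift_monomial_mul (w : FreeMonoid (Fin n)) (s : e.S) :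
    e.lift L x (e.monomial w * s) = FreeMonoid.lift x w * e.lift L x s := by
  induction w using FreeMonoid.inductionOn' generalizing s with
  | one => simp
  | of_mul i w ih =>
    rw [monomial_of_mul, mul_assoc, e.lift_t_mul L x hx, ih, map_mul, FreeMonoid.lift_eval_of,
      mul_assoc]

lemma lift_mul (s s' : e.S) : e.lift L x (s * s') = e.lift L x s * e.lift L x s' := by
  suffices (e.lift L x).comp (AddMonoidHom.mulRight s') =
      (AddMonoidHom.mulRight (e.lift L x s')).comp (e.lift L x) from DFunLike.congr_fun this s
  refine e.addHom_ext fun a w => ?_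
  simp only [AddMonoidHom.comp_apply, AddMonoidHom.coe_mulRight, mul_assoc, lift_ι_mul,
    e.lift_monomial_mul L x hx, lift_monomial]

omit hx

lemma lift_ι (a : A) : e.lift L x (e.ι a) = L a := by
  simpa using e.lift_ι_mul_monomial L x a 1

lemma lift_t (i : Fin n) : e.lift L x (e.t i) = x i := by
  simpa [monomial] using e.lift_monomial L x (FreeMonoid.of i)

include hx

noncomputable def liftRingHom : e.S →+* R where
  toFun := e.lift L x
  map_one' := by simpa using e.lift_ι L x 1
  map_mul' := e.lift_mul L x hx
  map_zero' := map_zero _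
  map_add' := map_add _

end lift

end OreExtension

def IsPseudoMultilinear {A : Type*} [Ring A] {n : ℕ} (σ : A →+* Matrix (Fin n) (Fin n) A)
    (δ : Fin n → A →+ A) {V : Type*} [AddCommGroup V] [Module A V] (T : Fin n → AddMonoid.End V) :
    Prop :=
  ∀ (i : Fin n) (a : A) (v : V), T i (a • v) = (∑ j, σ a i j • T j v) + δ i a • v

lemma IsPseudoMultilinear.mul_toAddMonoidEnd {A : Type*} [Ring A] {n : ℕ}
    {σ : A →+* Matrix (Fin n) (Fin n) A} {δ : Fin n → A →+ A} {V : Type*} [AddCommGroup V]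
    [Module A V] {T : Fin n → AddMonoid.End V} (hT : IsPseudoMultilinear σ δ T) (i : Fin n)
    (a : A) : T i * Module.toAddMonoidEnd A V a =
      (∑ j, Module.toAddMonoidEnd A V (σ a i j) * T j) + Module.toAddMonoidEnd A V (δ i a) := by
  refine AddMonoidHom.ext fun v => (hT i a v).trans ?_
  erw [AddMonoidHom.add_apply, AddMonoidHom.finsetSum_apply]
  rfl

theorem pmt_gives_ringHom_general {A : Type*} [Ring A] {n : ℕ}
    (σ : A →+* Matrix (Fin n) (Fin n) A) (δ : Fin n → A →+ A)
    (e : OreExtension A n σ δ)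
    (V : Type*) [AddCommGroup V] [Module A V]
    (T : Fin n → AddMonoid.End V)
    (hT : ∀ (i : Fin n) (a : A) (v : V),
      T i (a • v) = (∑ j, σ a i j • T j v) + δ i a • v) :
    ∃ φ : e.S →+* AddMonoid.End V,
      (∀ (a : A) (v : V), φ (e.ι a) v = a • v) ∧ (∀ i : Fin n, φ (e.t i) = T i) :=
  ⟨e.liftRingHom _ T (IsPseudoMultilinear.mul_toAddMonoidEnd hT),
    fun a v => DFunLike.congr_fun (e.lift_ι _ T a) v,
    e.lift_t _ T⟩

/-- Given a `(σ,δ)`-pseudo-multilinear transformation `T` on a left `A`-module `V`,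
the substitution map `φ : S → End(V,+)`, `φ(f) = f(T)` — determined by sending each
coefficient `a ∈ A` to left multiplication by `a` and each `t i` to `T i` — is a
ring homomorphism. -/
theorem pmt_gives_ringHom {A : Type*} [Ring A] {n : ℕ}
    (σ : A →+* Matrix (Fin n) (Fin n) A) (δ : Fin n → A →+ A)
    (hδ : ∀ (i : Fin n) (a b : A), δ i (a * b) = (∑ j, σ a i j * δ j b) + δ i a * b)
    (e : OreExtension A n σ δ)
    (V : Type*) [AddCommGroup V] [Module A V]
    (T : Fin n → AddMonoid.End V)
    (hT : ∀ (i : Fin n) (a : A) (v : V),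
      T i (a • v) = (∑ j, σ a i j • T j v) + δ i a • v) :
    ∃ φ : e.S →+* AddMonoid.End V,
      (∀ (a : A) (v : V), φ (e.ι a) v = a • v) ∧ (∀ i : Fin n, φ (e.t i) = T i) :=
  pmt_gives_ringHom_general σ δ e V T hT
end

section
/- Let A be a ring, S = A[t_1,…,t_n; σ, δ], f, g ∈ S, and a ∈ A^n. Then (fg)(a) = f(T_a)(g(a)) (the general product formula). In particular, for g = x ∈ A a constant, (f·x)(a) = f(T_a)(x). -/
section Intertwining

variable {S A : Type*} [Ring S] [AddCommGroup A]

def intertwiningSubring (I : Submodule S S) (ι : A →+ S) (φ : S →+* AddMonoid.End A) :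
    Subring S where
  carrier := {f | ∀ x, f * ι x - ι (φ f x) ∈ I}
  one_mem' x := by simp
  zero_mem' x := by simp
  mul_mem' {f g} hf hg x := by
    have hsplit : f * g * ι x - ι (φ (f * g) x)
        = f * (g * ι x - ι (φ g x)) + (f * ι (φ g x) - ι (φ f (φ g x))) := by
      have hφ : φ (f * g) x = φ f (φ g x) := by rw [map_mul]; rfl
      rw [hφ, mul_sub, mul_assoc]; abel
    rw [hsplit]
    exact add_mem (I.smul_mem f (hg x)) (hf (φ g x))
  add_mem' {f g} hf hg x := by
    have hsplit : (f + g) * ι x - ι (φ (f + g) x)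
        = (f * ι x - ι (φ f x)) + (g * ι x - ι (φ g x)) := by
      have hφ : φ (f + g) x = φ f x + φ g x := by rw [map_add]; rfl
      rw [hφ, map_add, add_mul]; abel
    rw [hsplit]
    exact add_mem (hf x) (hg x)
  neg_mem' {f} hf x := by
    have hsplit : -f * ι x - ι (φ (-f) x) = -(f * ι x - ι (φ f x)) := by
      have hφ : φ (-f) x = -φ f x := by rw [map_neg]; rfl
      rw [hφ, map_neg, neg_mul]; abel
    rw [hsplit]
    exact neg_mem (hf x)

variable {I : Submodule S S} {ι : A →+ S} {φ : S →+* AddMonoid.End A}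

theorem mem_intertwiningSubring {f : S} :
    f ∈ intertwiningSubring I ι φ ↔ ∀ x, f * ι x - ι (φ f x) ∈ I :=
  Iff.rfl

theorem mul_sub_mem_of_mem_intertwiningSubring {f g : S} {r : A}
    (hf : f ∈ intertwiningSubring I ι φ) (hg : g - ι r ∈ I) : f * g - ι (φ f r) ∈ I := by
  have hsplit : f * g - ι (φ f r) = f * (g - ι r) + (f * ι r - ι (φ f r)) := by
    rw [mul_sub]; abel
  rw [hsplit]
  exact add_mem (I.smul_mem f hg) (hf r)

end Intertwining

namespace OreExtension

variable {A : Type*} [Ring A] {n : ℕ} {σ : A →+* Matrix (Fin n) (Fin n) A} {δ : Fin n → A →+ A}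

theorem closure_range_ι_union_range_t (e : OreExtension A n σ δ) :
    Subring.closure (Set.range e.ι ∪ Set.range e.t) = ⊤ := by
  refine eq_top_iff.2 fun f _ => ?_
  obtain ⟨c, rfl, -⟩ := e.unique_repr f
  refine sum_mem fun w _ =>
    mul_mem (Subring.subset_closure (Or.inl ⟨_, rfl⟩)) (list_prod_mem fun z hz => ?_)
  obtain ⟨i, -, rfl⟩ := List.mem_map.mp hz
  exact Subring.subset_closure (Or.inr ⟨i, rfl⟩)

theorem t_mul_ι_sub_mem_span (e : OreExtension A n σ δ) (a : Fin n → A) (i : Fin n) (x : A) :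
    e.t i * e.ι x - e.ι ((∑ j, σ x i j * a j) + δ i x) ∈
      Submodule.span e.S (Set.range fun j => e.t j - e.ι (a j)) := by
  have hcomm : e.t i * e.ι x - e.ι ((∑ j, σ x i j * a j) + δ i x)
      = ∑ j, e.ι (σ x i j) • (e.t j - e.ι (a j)) := by
    simp only [e.commute_rule, map_add, map_sum, map_mul, add_sub_add_right_eq_sub,
      ← Finset.sum_sub_distrib, smul_eq_mul, mul_sub]
  rw [hcomm]
  exact sum_mem fun j _ => Submodule.smul_mem _ _ (Submodule.subset_span ⟨j, rfl⟩)

end OreExtension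

theorem product_formula_general {A : Type*} [Ring A] {n : ℕ}
    (σ : A →+* Matrix (Fin n) (Fin n) A) (δ : Fin n → A →+ A)
    (e : OreExtension A n σ δ) (a : Fin n → A)
    (φ : e.S →+* AddMonoid.End A)
    (hφι : ∀ c x : A, φ (e.ι c) x = c * x)
    (hφt : ∀ (i : Fin n) (x : A), φ (e.t i) x = (∑ j, σ x i j * a j) + δ i x) :
    (∀ (f g : e.S) (rg : A),
        g - e.ι rg ∈ Submodule.span e.S (Set.range fun i => e.t i - e.ι (a i)) →
        f * g - e.ι (φ f rg) ∈
          Submodule.span e.S (Set.range fun i => e.t i - e.ι (a i))) ∧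
    (∀ (f : e.S) (x : A),
        f * e.ι x - e.ι (φ f x) ∈
          Submodule.span e.S (Set.range fun i => e.t i - e.ι (a i))) := by
  set M := intertwiningSubring (Submodule.span e.S (Set.range fun i => e.t i - e.ι (a i)))
    (e.ι : A →+ e.S) φ
  have hM : M = ⊤ := by
    refine top_unique (e.closure_range_ι_union_range_t ▸ Subring.closure_le.2 ?_)
    rintro _ (⟨c, rfl⟩ | ⟨i, rfl⟩) x
    · simp [hφι]
    · simpa [hφt] using e.t_mul_ι_sub_mem_span a i x
  have hmem : ∀ f, f ∈ M := fun f => hM ▸ Subring.mem_top f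
  exact ⟨fun f g rg hg => mul_sub_mem_of_mem_intertwiningSubring (hmem f) hg,
    fun f x => by simpa using (mem_intertwiningSubring.1 (hmem f)) x⟩

/-- The general product formula: `(fg)(a) = f(T_a)(g(a))`, where evaluation at `a` is
taken modulo the left ideal `I = ∑ S(t_i − a_i)` and `f(T_a) = φ_a(f)` for the ring
homomorphism `φ_a : S → End(A,+)` attached to the PMT `T_a`.  Concretely: if `r_g ∈ A`
represents `g + I` then `φ_a f r_g` represents `fg + I`.  In particular for a constant
`g = x ∈ A`, `(f·x)(a) = f(T_a)(x)`. -/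
theorem product_formula {A : Type*} [Ring A] {n : ℕ}
    (σ : A →+* Matrix (Fin n) (Fin n) A) (δ : Fin n → A →+ A)
    (hδ : ∀ (i : Fin n) (a b : A), δ i (a * b) = (∑ j, σ a i j * δ j b) + δ i a * b)
    (e : OreExtension A n σ δ) (a : Fin n → A)
    (φ : e.S →+* AddMonoid.End A)
    (hφι : ∀ c x : A, φ (e.ι c) x = c * x)
    (hφt : ∀ (i : Fin n) (x : A), φ (e.t i) x = (∑ j, σ x i j * a j) + δ i x) :
    (∀ (f g : e.S) (rg : A),
        g - e.ι rg ∈ Submodule.span e.S (Set.range fun i => e.t i - e.ι (a i)) →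
        f * g - e.ι (φ f rg) ∈
          Submodule.span e.S (Set.range fun i => e.t i - e.ι (a i))) ∧
    (∀ (f : e.S) (x : A),
        f * e.ι x - e.ι (φ f x) ∈
          Submodule.span e.S (Set.range fun i => e.t i - e.ι (a i))) :=
  product_formula_general σ δ e a φ hφι hφt
end
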